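/- arXiv:2511.07449 — 2 statements merged into one kernel-verified Lean document; each statement's English description precedes it below -/
import Mathlib

section
/- Wronskian identity for the modified Bessel functions: for every x > 0, K₀(x)·I₁(x) + I₀(x)·K₁(x) = 1/x. -/
open Real MeasureTheory Set

/-- The modified Bessel function of the first kind of order zero,
`I₀(x) = (1/π) ∫₀^π exp (x cos θ) dθ`. -/
noncomputable def I0 (x : ℝ) : ℝ := (1 / π) * ∫ θ in (0:ℝ)..π, Real.exp (x * Real.cos θ)

/-- The modified Bessel function of the first kind of order one,
`I₁(x) = (1/π) ∫₀^π exp (x cos θ) cos θ dθ`. -/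
noncomputable def I1 (x : ℝ) : ℝ :=
  (1 / π) * ∫ θ in (0:ℝ)..π, Real.exp (x * Real.cos θ) * Real.cos θ

/-- The modified Bessel function of the second kind of order zero,
`K₀(x) = ∫₀^∞ exp (−x cosh t) dt`. -/
noncomputable def K0 (x : ℝ) : ℝ := ∫ t in Ioi (0:ℝ), Real.exp (-x * Real.cosh t)

/-- The modified Bessel function of the second kind of order one,
`K₁(x) = ∫₀^∞ exp (−x cosh t) cosh t dt`. -/
noncomputable def K1 (x : ℝ) : ℝ :=
  ∫ t in Ioi (0:ℝ), Real.exp (-x * Real.cosh t) * Real.cosh t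

/-!
Differentiating under the integral sign, and integrating by parts against the exact derivatives
of `e^{x cos θ} sin θ` and `e^{-x cosh t} sinh t`, gives
`I₀' = I₁`, `(x I₁)' = x I₀`, `K₀' = -K₁` and `(x K₁)' = -x K₀`.
Hence `W(x) = K₀ (x I₁) + I₀ (x K₁)` has zero derivative and is constant on `(0, ∞)`.
As `x → 0⁺`: `I₀ → 1`, `I₁ → 0`, and `x K₁(x) → 1` because `cosh t = sinh t + e^{-t}`,
`x ∫ e^{-x cosh t} sinh t dt = e^{-x}` and `0 ≤ ∫ e^{-x cosh t} e^{-t} dt ≤ 1`.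
Since `0 ≤ x K₀ ≤ x K₁` stays bounded, `W → 1`, so `W ≡ 1`.
-/
open Filter Topology
open scoped Nat

lemma pow_mul_exp_neg_mul_le {c u : ℝ} (hc : 0 < c) (hu : 0 ≤ u) (n : ℕ) :
    u ^ n * exp (-(c * u)) ≤ n ! / c ^ n := by
  have h := pow_div_factorial_le_exp (c * u) (by positivity) n
  rw [div_le_iff₀ (by positivity), mul_pow] at h
  rw [le_div_iff₀ (by positivity), exp_neg]
  calc u ^ n * (exp (c * u))⁻¹ * c ^ n = (c ^ n * u ^ n) * (exp (c * u))⁻¹ := by ring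
    _ ≤ (exp (c * u) * n !) * (exp (c * u))⁻¹ := by gcongr
    _ = n ! := by field_simp

lemma abs_sinh_le_cosh (t : ℝ) : |sinh t| ≤ cosh t := by
  rw [abs_sinh, ← cosh_abs]
  exact (sinh_lt_cosh _).le

section CoshWeight

variable {x : ℝ}

/-- One half of `e^{-x cosh t}` absorbs `cosh t ^ n`; the other decays since `t ≤ cosh t`. -/
lemma exp_neg_mul_cosh_mul_cosh_pow_le (hx : 0 < x) (n : ℕ) {t : ℝ} (ht : 0 ≤ t) :
    exp (-x * cosh t) * cosh t ^ n ≤ n ! / (x / 2) ^ n * exp (-(x / 2) * t) := by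
  have hpow := pow_mul_exp_neg_mul_le (half_pos hx) (cosh_pos t).le n
  have hdecay : exp (-((x / 2) * cosh t)) ≤ exp (-(x / 2) * t) := by
    have : t ≤ cosh t := (self_le_sinh_iff.2 ht).trans (sinh_lt_cosh t).le
    gcongr
    nlinarith
  calc exp (-x * cosh t) * cosh t ^ n
      = cosh t ^ n * exp (-((x / 2) * cosh t)) * exp (-((x / 2) * cosh t)) := by
        rw [mul_assoc, ← exp_add]; ring_nf
    _ ≤ n ! / (x / 2) ^ n * exp (-(x / 2) * t) := by gcongr

variable {f : ℝ → ℝ} {n : ℕ}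

lemma norm_exp_neg_mul_cosh_mul_le (hx : 0 < x) (hfn : ∀ t, 0 ≤ t → |f t| ≤ cosh t ^ n)
    {t : ℝ} (ht : 0 ≤ t) :
    ‖exp (-x * cosh t) * f t‖ ≤ n ! / (x / 2) ^ n * exp (-(x / 2) * t) := by
  rw [norm_mul, norm_of_nonneg (exp_pos _).le, norm_eq_abs]
  exact (mul_le_mul_of_nonneg_left (hfn t ht) (exp_pos _).le).trans
    (exp_neg_mul_cosh_mul_cosh_pow_le hx n ht)

lemma integrableOn_exp_neg_mul_cosh_mul (hx : 0 < x) (hf : Continuous f)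
    (hfn : ∀ t, 0 ≤ t → |f t| ≤ cosh t ^ n) :
    IntegrableOn (fun t => exp (-x * cosh t) * f t) (Ioi 0) := by
  refine Integrable.mono'
    ((exp_neg_integrableOn_Ioi 0 (half_pos hx)).const_mul (n ! / (x / 2) ^ n)) (by fun_prop) ?_
  filter_upwards [ae_restrict_mem measurableSet_Ioi] with t ht
  exact norm_exp_neg_mul_cosh_mul_le hx hfn (le_of_lt ht)

lemma tendsto_exp_neg_mul_cosh_mul_atTop (hx : 0 < x) (hfn : ∀ t, 0 ≤ t → |f t| ≤ cosh t ^ n) :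
    Tendsto (fun t => exp (-x * cosh t) * f t) atTop (𝓝 0) := by
  have hdecay : Tendsto (fun t => n ! / (x / 2) ^ n * exp (-(x / 2) * t)) atTop (𝓝 0) := by
    simpa using (tendsto_exp_atBot.comp
      (tendsto_id.const_mul_atTop_of_neg (by linarith : -(x / 2) < 0))).const_mul _
  refine squeeze_zero_norm' ?_ hdecay
  filter_upwards [eventually_ge_atTop 0] with t ht
  exact norm_exp_neg_mul_cosh_mul_le hx hfn ht

end CoshWeight

section KBessel

variable {x : ℝ}

lemma integrableOn_exp_neg_mul_cosh (hx : 0 < x) :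
    IntegrableOn (fun t => exp (-x * cosh t)) (Ioi 0) := by
  simpa using integrableOn_exp_neg_mul_cosh_mul hx continuous_const (f := fun _ => 1) (n := 0)
    (fun t _ => by simp)

lemma integrableOn_exp_neg_mul_cosh_mul_cosh (hx : 0 < x) :
    IntegrableOn (fun t => exp (-x * cosh t) * cosh t) (Ioi 0) :=
  integrableOn_exp_neg_mul_cosh_mul hx continuous_cosh (n := 1)
    (fun t _ => by simp [abs_of_pos (cosh_pos t)])

lemma hasDerivAt_integral_exp_neg_mul_cosh_mul {f : ℝ → ℝ} {n : ℕ} (hx : 0 < x)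
    (hf : Continuous f) (hfn : ∀ t, 0 ≤ t → |f t| ≤ cosh t ^ n) :
    HasDerivAt (fun y => ∫ t in Ioi 0, exp (-y * cosh t) * f t)
      (-∫ t in Ioi 0, exp (-x * cosh t) * (cosh t * f t)) x := by
  have hcoshf : ∀ t, 0 ≤ t → |cosh t * f t| ≤ cosh t ^ (n + 1) := fun t ht => by
    rw [abs_mul, abs_of_pos (cosh_pos t), pow_succ']
    exact mul_le_mul_of_nonneg_left (hfn t ht) (cosh_pos t).le
  have h := hasDerivAt_integral_of_dominated_loc_of_deriv_le (μ := volume.restrict (Ioi 0))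
    (F := fun y t => exp (-y * cosh t) * f t)
    (F' := fun y t => -(exp (-y * cosh t) * (cosh t * f t)))
    (bound := fun t => exp (-(x / 2) * cosh t) * cosh t ^ (n + 1))
    (Metric.ball_mem_nhds x (half_pos hx)) (.of_forall fun y => by fun_prop)
    (integrableOn_exp_neg_mul_cosh_mul hx hf hfn) (by fun_prop) ?_
    (integrableOn_exp_neg_mul_cosh_mul (half_pos hx) (by fun_prop)
      fun t _ => (abs_of_pos (pow_pos (cosh_pos t) _)).le) ?_
  · simpa only [integral_neg] using h.2
  · filter_upwards [ae_restrict_mem measurableSet_Ioi] with t ht y hy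
    have hy : x / 2 ≤ y := by
      rw [Metric.mem_ball, dist_eq_norm, norm_eq_abs] at hy; linarith [neg_abs_le (y - x)]
    rw [norm_neg, norm_mul, norm_of_nonneg (exp_pos _).le, norm_eq_abs]
    refine mul_le_mul (exp_le_exp.2 ?_) (hcoshf t ht.le) (abs_nonneg _) (exp_pos _).le
    nlinarith [cosh_pos t]
  · filter_upwards with t y _
    simpa [mul_assoc] using
      (((hasDerivAt_id y).neg.mul_const (cosh t)).exp.mul_const (f t))

lemma hasDerivAt_K0 (hx : 0 < x) : HasDerivAt K0 (-K1 x) x := by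
  convert hasDerivAt_integral_exp_neg_mul_cosh_mul hx continuous_const (f := fun _ => 1) (n := 0)
    (fun t _ => by simp) using 1
  · ext y; simp [K0]
  · simp [K1]

lemma hasDerivAt_K1 (hx : 0 < x) :
    HasDerivAt K1 (-∫ t in Ioi 0, exp (-x * cosh t) * (cosh t * cosh t)) x :=
  hasDerivAt_integral_exp_neg_mul_cosh_mul hx continuous_cosh (n := 1)
    (fun t _ => by simp [abs_of_pos (cosh_pos t)])

lemma integrableOn_exp_neg_mul_cosh_mul_sinh_sq (hx : 0 < x) :
    IntegrableOn (fun t => exp (-x * cosh t) * sinh t ^ 2) (Ioi 0) :=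
  integrableOn_exp_neg_mul_cosh_mul hx (by fun_prop) (n := 2) fun t _ => by
    rw [abs_of_nonneg (sq_nonneg _), ← sq_abs]
    exact pow_le_pow_left₀ (abs_nonneg _) (abs_sinh_le_cosh t) 2

lemma mul_integral_exp_neg_mul_cosh_mul_sinh_sq (hx : 0 < x) :
    x * ∫ t in Ioi 0, exp (-x * cosh t) * sinh t ^ 2 = K1 x := by
  have hderiv : ∀ t ∈ Ici (0 : ℝ), HasDerivAt (fun t => exp (-x * cosh t) * sinh t)
      (exp (-x * cosh t) * cosh t - x * (exp (-x * cosh t) * sinh t ^ 2)) t := fun t _ => by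
    refine (((hasDerivAt_cosh t).const_mul (-x)).exp.fun_mul (hasDerivAt_sinh t)).congr_deriv ?_
    ring
  have hibp := integral_Ioi_of_hasDerivAt_of_tendsto' hderiv
    ((integrableOn_exp_neg_mul_cosh_mul_cosh hx).sub
      ((integrableOn_exp_neg_mul_cosh_mul_sinh_sq hx).const_mul x))
    (tendsto_exp_neg_mul_cosh_mul_atTop hx (n := 1) fun t _ => by simpa using abs_sinh_le_cosh t)
  rw [integral_sub (integrableOn_exp_neg_mul_cosh_mul_cosh hx)
    ((integrableOn_exp_neg_mul_cosh_mul_sinh_sq hx).const_mul x), integral_const_mul] at hibp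
  simp only [sinh_zero, mul_zero, sub_zero] at hibp
  rw [K1]
  linarith

lemma hasDerivAt_mul_K1 (hx : 0 < x) : HasDerivAt (fun y => y * K1 y) (-(x * K0 x)) x := by
  have hcosh_sq : ∫ t in Ioi 0, exp (-x * cosh t) * (cosh t * cosh t)
      = K0 x + ∫ t in Ioi 0, exp (-x * cosh t) * sinh t ^ 2 := by
    rw [K0, ← integral_add (integrableOn_exp_neg_mul_cosh hx)
      (integrableOn_exp_neg_mul_cosh_mul_sinh_sq hx)]
    congr 1 with t
    rw [← sq, cosh_sq]
    ring
  refine ((hasDerivAt_id' x).fun_mul (hasDerivAt_K1 hx)).congr_deriv ?_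
  rw [hcosh_sq, ← mul_integral_exp_neg_mul_cosh_mul_sinh_sq hx]
  ring

end KBessel

section KNearZero

variable {x : ℝ}

lemma integrableOn_exp_neg_mul_cosh_mul_sinh (hx : 0 < x) :
    IntegrableOn (fun t => exp (-x * cosh t) * sinh t) (Ioi 0) :=
  integrableOn_exp_neg_mul_cosh_mul hx continuous_sinh (n := 1)
    fun t _ => by simpa using abs_sinh_le_cosh t

lemma integral_exp_neg_mul_cosh_mul_sinh (hx : 0 < x) :
    ∫ t in Ioi 0, exp (-x * cosh t) * sinh t = exp (-x) / x := by
  have hderiv : ∀ t ∈ Ici (0 : ℝ), HasDerivAt (fun t => -exp (-x * cosh t) / x)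
      (exp (-x * cosh t) * sinh t) t := fun t _ => by
    refine (((hasDerivAt_cosh t).const_mul (-x)).exp.neg.div_const x).congr_deriv ?_
    field_simp
  have hlim : Tendsto (fun t => -exp (-x * cosh t) / x) atTop (𝓝 0) := by
    simpa using ((tendsto_exp_neg_mul_cosh_mul_atTop hx (f := fun _ => 1) (n := 0)
      fun t _ => by simp).neg.div_const x)
  rw [integral_Ioi_of_hasDerivAt_of_tendsto' hderiv
    (integrableOn_exp_neg_mul_cosh_mul_sinh hx) hlim]
  simp [neg_div]

lemma integrableOn_exp_neg_mul_cosh_mul_exp_neg (hx : 0 < x) :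
    IntegrableOn (fun t => exp (-x * cosh t) * exp (-t)) (Ioi 0) :=
  integrableOn_exp_neg_mul_cosh_mul hx (by fun_prop) (n := 0) fun t ht => by
    simpa [abs_of_pos (exp_pos _)] using ht

lemma K1_eq_exp_neg_div_add (hx : 0 < x) :
    K1 x = exp (-x) / x + ∫ t in Ioi 0, exp (-x * cosh t) * exp (-t) := by
  rw [← integral_exp_neg_mul_cosh_mul_sinh hx, ← integral_add
    (integrableOn_exp_neg_mul_cosh_mul_sinh hx) (integrableOn_exp_neg_mul_cosh_mul_exp_neg hx), K1]
  congr 1 with t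
  rw [← mul_add, ← cosh_sub_sinh]
  ring

lemma exp_neg_le_mul_K1 (hx : 0 < x) : exp (-x) ≤ x * K1 x := by
  have : 0 ≤ ∫ t in Ioi 0, exp (-x * cosh t) * exp (-t) :=
    setIntegral_nonneg measurableSet_Ioi fun t _ => by positivity
  rw [K1_eq_exp_neg_div_add hx, mul_add, mul_div_cancel₀ _ hx.ne']
  exact le_add_of_nonneg_right (mul_nonneg hx.le this)

lemma mul_K1_le (hx : 0 < x) : x * K1 x ≤ exp (-x) + x := by
  have : ∫ t in Ioi 0, exp (-x * cosh t) * exp (-t) ≤ 1 := by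
    rw [← integral_exp_neg_Ioi_zero]
    refine setIntegral_mono_on (integrableOn_exp_neg_mul_cosh_mul_exp_neg hx)
      (by simpa using exp_neg_integrableOn_Ioi 0 one_pos) measurableSet_Ioi fun t _ => ?_
    refine mul_le_of_le_one_left (exp_pos _).le (exp_le_one_iff.2 ?_)
    nlinarith [cosh_pos t]
  rw [K1_eq_exp_neg_div_add hx, mul_add, mul_div_cancel₀ _ hx.ne']
  exact add_le_add_right (mul_le_of_le_one_right hx.le this) _

lemma tendsto_mul_K1_nhdsGT_zero : Tendsto (fun x => x * K1 x) (𝓝[>] 0) (𝓝 1) := by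
  have hlow : Tendsto (fun x => exp (-x)) (𝓝[>] 0) (𝓝 1) :=
    ((by fun_prop : Continuous fun x => exp (-x)).tendsto' 0 1 (by simp)).mono_left
      nhdsWithin_le_nhds
  have hup : Tendsto (fun x => exp (-x) + x) (𝓝[>] 0) (𝓝 1) :=
    ((by fun_prop : Continuous fun x => exp (-x) + x).tendsto' 0 1 (by simp)).mono_left
      nhdsWithin_le_nhds
  exact tendsto_of_tendsto_of_tendsto_of_le_of_le' hlow hup
    (eventually_nhdsWithin_of_forall fun x hx => exp_neg_le_mul_K1 hx)
    (eventually_nhdsWithin_of_forall fun x hx => mul_K1_le hx)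

lemma K0_nonneg (x : ℝ) : 0 ≤ K0 x :=
  setIntegral_nonneg measurableSet_Ioi fun _ _ => (exp_pos _).le

lemma K0_le_K1 (hx : 0 < x) : K0 x ≤ K1 x :=
  setIntegral_mono_on (integrableOn_exp_neg_mul_cosh hx)
    (integrableOn_exp_neg_mul_cosh_mul_cosh hx) measurableSet_Ioi fun t _ =>
    le_mul_of_one_le_right (exp_pos _).le (one_le_cosh t)

end KNearZero

section IBessel

lemma hasDerivAt_intervalIntegral_exp_mul_cos_mul {g : ℝ → ℝ} (hg : Continuous g) (a b x : ℝ) :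
    HasDerivAt (fun y => ∫ θ in a..b, exp (y * cos θ) * g θ)
      (∫ θ in a..b, exp (x * cos θ) * (cos θ * g θ)) x := by
  have h := intervalIntegral.hasDerivAt_integral_of_dominated_loc_of_deriv_le
    (μ := volume) (a := a) (b := b) (x₀ := x)
    (F := fun y θ => exp (y * cos θ) * g θ) (F' := fun y θ => exp (y * cos θ) * (cos θ * g θ))
    (bound := fun θ => exp (|x| + 1) * |g θ|) (Metric.ball_mem_nhds x one_pos)
    (.of_forall fun y => by fun_prop) ((by fun_prop : Continuous _).intervalIntegrable _ _)
    (by fun_prop) ?_ ((by fun_prop : Continuous _).intervalIntegrable _ _) ?_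
  · exact h.2
  · refine .of_forall fun θ _ y hy => ?_
    have hy : |y| ≤ |x| + 1 := by
      rw [Metric.mem_ball, dist_eq_norm, norm_eq_abs] at hy
      linarith [abs_sub_abs_le_abs_sub y x]
    rw [norm_mul, norm_mul, norm_of_nonneg (exp_pos _).le, norm_eq_abs, norm_eq_abs,
      ← mul_assoc]
    gcongr
    calc exp (y * cos θ) * |cos θ| ≤ exp (|y|) * 1 := by
          gcongr
          · exact ((le_abs_self _).trans_eq (abs_mul _ _)).trans
              (mul_le_of_le_one_right (abs_nonneg y) (abs_cos_le_one θ))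
          · exact abs_cos_le_one θ
      _ ≤ exp (|x| + 1) := by rw [mul_one]; gcongr
  · exact .of_forall fun θ _ y _ =>
      ((hasDerivAt_mul_const (cos θ)).exp.mul_const (g θ)).congr_deriv (by ring)

lemma hasDerivAt_I0 (x : ℝ) : HasDerivAt I0 (I1 x) x := by
  have h := (hasDerivAt_intervalIntegral_exp_mul_cos_mul continuous_const 0 π x
    (g := fun _ => 1)).const_mul (1 / π)
  simp only [mul_one] at h
  exact h

lemma hasDerivAt_I1 (x : ℝ) :
    HasDerivAt I1 (1 / π * ∫ θ in 0..π, exp (x * cos θ) * (cos θ * cos θ)) x :=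
  (hasDerivAt_intervalIntegral_exp_mul_cos_mul continuous_cos 0 π x).const_mul (1 / π)

lemma mul_intervalIntegral_exp_mul_cos_mul_sin_sq (x : ℝ) :
    x * ∫ θ in 0..π, exp (x * cos θ) * sin θ ^ 2 = ∫ θ in 0..π, exp (x * cos θ) * cos θ := by
  have hderiv : ∀ θ ∈ uIcc 0 π, HasDerivAt (fun θ => exp (x * cos θ) * sin θ)
      (exp (x * cos θ) * cos θ - x * (exp (x * cos θ) * sin θ ^ 2)) θ := fun θ _ =>
    (((hasDerivAt_cos θ).const_mul x).exp.fun_mul (hasDerivAt_sin θ)).congr_deriv (by ring)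
  have hint {f : ℝ → ℝ} (hf : Continuous f) : IntervalIntegrable f volume 0 π :=
    hf.intervalIntegrable 0 π
  have hftc := intervalIntegral.integral_eq_sub_of_hasDerivAt hderiv (hint (by fun_prop))
  rw [intervalIntegral.integral_sub (hint (by fun_prop)) (hint (by fun_prop)),
    intervalIntegral.integral_const_mul] at hftc
  simp only [sin_pi, sin_zero, mul_zero, sub_zero] at hftc
  linarith

lemma hasDerivAt_mul_I1 (x : ℝ) : HasDerivAt (fun y => y * I1 y) (x * I0 x) x := by
  have hcos_sq : ∫ θ in 0..π, exp (x * cos θ) * (cos θ * cos θ)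
      = (∫ θ in 0..π, exp (x * cos θ)) - ∫ θ in 0..π, exp (x * cos θ) * sin θ ^ 2 := by
    rw [← intervalIntegral.integral_sub ((by fun_prop : Continuous _).intervalIntegrable _ _)
      ((by fun_prop : Continuous _).intervalIntegrable _ _)]
    congr 1 with θ
    rw [← sq, cos_sq']
    ring
  refine ((hasDerivAt_id' x).fun_mul (hasDerivAt_I1 x)).congr_deriv ?_
  rw [hcos_sq, I0, I1]
  linear_combination (-1 / π) * mul_intervalIntegral_exp_mul_cos_mul_sin_sq x

lemma continuous_I0 : Continuous I0 :=
  continuous_iff_continuousAt.2 fun x => (hasDerivAt_I0 x).continuousAt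

lemma continuous_I1 : Continuous I1 :=
  continuous_iff_continuousAt.2 fun x => (hasDerivAt_I1 x).continuousAt

lemma I0_zero : I0 0 = 1 := by
  simp [I0, pi_ne_zero]

lemma I1_zero : I1 0 = 0 := by
  simp [I1]

end IBessel

noncomputable def scaledWronskian (x : ℝ) : ℝ := K0 x * (x * I1 x) + I0 x * (x * K1 x)

lemma hasDerivAt_scaledWronskian {x : ℝ} (hx : 0 < x) : HasDerivAt scaledWronskian 0 x :=
  (((hasDerivAt_K0 hx).fun_mul (hasDerivAt_mul_I1 x)).fun_add
    ((hasDerivAt_I0 x).fun_mul (hasDerivAt_mul_K1 hx))).congr_deriv (by ring)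

lemma tendsto_scaledWronskian_nhdsGT_zero : Tendsto scaledWronskian (𝓝[>] 0) (𝓝 1) := by
  have hI0 : Tendsto I0 (𝓝[>] 0) (𝓝 1) :=
    (continuous_I0.tendsto' 0 1 I0_zero).mono_left nhdsWithin_le_nhds
  have hI1 : Tendsto (fun x => |I1 x|) (𝓝[>] 0) (𝓝 0) :=
    ((continuous_abs.comp continuous_I1).tendsto' 0 0 (by simp [I1_zero])).mono_left
      nhdsWithin_le_nhds
  have hK0 : Tendsto (fun x => K0 x * (x * I1 x)) (𝓝[>] 0) (𝓝 0) := by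
    refine squeeze_zero_norm' (eventually_nhdsWithin_of_forall fun x hx => ?_)
      (by simpa using hI1.mul tendsto_mul_K1_nhdsGT_zero)
    rw [norm_eq_abs, abs_mul, abs_mul, abs_of_nonneg (K0_nonneg x), abs_of_pos hx]
    calc K0 x * (x * |I1 x|) ≤ K1 x * (x * |I1 x|) :=
          mul_le_mul_of_nonneg_right (K0_le_K1 hx) (mul_nonneg (le_of_lt hx) (abs_nonneg _))
      _ = |I1 x| * (x * K1 x) := by ring
  have h := hK0.add (hI0.mul tendsto_mul_K1_nhdsGT_zero)
  rw [zero_add, one_mul] at h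
  exact h

lemma scaledWronskian_eq_one {x : ℝ} (hx : 0 < x) : scaledWronskian x = 1 := by
  have hconst : ∀ y ∈ Ioi (0 : ℝ), scaledWronskian y = scaledWronskian x := fun y hy =>
    isOpen_Ioi.is_const_of_deriv_eq_zero isPreconnected_Ioi
      (fun z hz => (hasDerivAt_scaledWronskian hz).differentiableAt.differentiableWithinAt)
      (fun z hz => (hasDerivAt_scaledWronskian hz).deriv) hy hx
  refine tendsto_nhds_unique ?_ tendsto_scaledWronskian_nhdsGT_zero
  exact tendsto_const_nhds.congr' (eventually_nhdsWithin_of_forall fun y hy => (hconst y hy).symm)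

/-- Wronskian identity for the modified Bessel functions:
`K₀(x)·I₁(x) + I₀(x)·K₁(x) = 1/x` for every `x > 0`. -/
theorem bessel_wronskian (x : ℝ) (hx : 0 < x) :
    K0 x * I1 x + I0 x * K1 x = 1 / x := by
  have h := scaledWronskian_eq_one hx
  rw [scaledWronskian] at h
  rw [eq_div_iff hx.ne']
  linear_combination h
end

section
/- Convergence of the Hankel inversion integral for the full fractional solution: for every q > 0, every real α with 0 < α ≤ 1, and every r > 0, L > 0, the function ρ ↦ J₀(ρ·r)·J₁(ρ·L)/(ρ^{2α} + q) is Lebesgue integrable on (0,∞). -/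
/-!
Near `0` the integrand is continuous, its denominator being at least `q`. At infinity each Bessel
factor is `O(x^{-1/2})`: after folding `[0, π]` onto `[0, π/2]` by `θ ↦ π - θ` (which also kills
the `cos θ cos (x sin θ)` part of `J₁`), the integrand on `[0, π/2 - ε]` is a nondecreasing weight
(`1 / (x cos θ)`, resp. `tan θ / x`) times the `θ`-derivative of a function bounded by `1`, so an
integration by parts bounds it by `2 / (x cos (π/2 - ε))`, and `ε = x^{-1/2}` balances this
against the trivial bound `ε` on the rest. Hence the integrand is `O(ρ^{-1-2α})` at infinity,
which is integrable since `α > 0`.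
-/

open Real MeasureTheory Set

/-- The Bessel function of the first kind of order zero,
`J₀(x) = (1/π) ∫₀^π cos (x sin θ) dθ`. -/
noncomputable def J0 (x : ℝ) : ℝ := (1 / π) * ∫ θ in (0:ℝ)..π, Real.cos (x * Real.sin θ)

/-- The Bessel function of the first kind of order one,
`J₁(x) = (1/π) ∫₀^π cos (θ − x sin θ) dθ`. -/
noncomputable def J1 (x : ℝ) : ℝ := (1 / π) * ∫ θ in (0:ℝ)..π, Real.cos (θ - x * Real.sin θ)

open Filter Asymptotics

lemma abs_intervalIntegral_mul_deriv_le_two_mul {k k' F F' : ℝ → ℝ} {a b : ℝ} (hab : a ≤ b)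
    (hk : ∀ θ ∈ Icc a b, HasDerivAt k (k' θ) θ) (hF : ∀ θ ∈ Icc a b, HasDerivAt F (F' θ) θ)
    (hk'c : ContinuousOn k' (Icc a b)) (hF'c : ContinuousOn F' (Icc a b))
    (hk'_nonneg : ∀ θ ∈ Icc a b, 0 ≤ k' θ) (hka : 0 ≤ k a) (hF_le : ∀ θ ∈ Icc a b, |F θ| ≤ 1) :
    |∫ θ in a..b, k θ * F' θ| ≤ 2 * k b := by
  have hk'i : IntervalIntegrable k' volume a b := hk'c.intervalIntegrable_of_Icc hab
  have hFc : ContinuousOn F (Icc a b) := fun θ hθ => (hF θ hθ).continuousAt.continuousWithinAt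
  have hk_sub : ∫ θ in a..b, k' θ = k b - k a :=
    intervalIntegral.integral_eq_sub_of_hasDerivAt (by rwa [uIcc_of_le hab]) hk'i
  have hka_le : k a ≤ k b := by
    have := intervalIntegral.integral_nonneg (μ := volume) hab hk'_nonneg
    linarith
  have hrem : |∫ θ in a..b, k' θ * F θ| ≤ k b - k a :=
    calc |∫ θ in a..b, k' θ * F θ| ≤ ∫ θ in a..b, |k' θ * F θ| :=
          intervalIntegral.abs_integral_le_integral_abs hab
      _ ≤ ∫ θ in a..b, k' θ := by
          refine intervalIntegral.integral_mono_on hab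
            ((hk'c.mul hFc).intervalIntegrable_of_Icc hab).abs hk'i fun θ hθ => ?_
          rw [abs_mul, abs_of_nonneg (hk'_nonneg θ hθ)]
          exact mul_le_of_le_one_right (hk'_nonneg θ hθ) (hF_le θ hθ)
      _ = k b - k a := hk_sub
  have hb : |k b * F b| ≤ k b := by
    rw [abs_mul, abs_of_nonneg (hka.trans hka_le)]
    exact mul_le_of_le_one_right (hka.trans hka_le) (hF_le b (right_mem_Icc.2 hab))
  have ha : |k a * F a| ≤ k a := by
    rw [abs_mul, abs_of_nonneg hka]
    exact mul_le_of_le_one_right hka (hF_le a (left_mem_Icc.2 hab))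
  rw [intervalIntegral.integral_mul_deriv_eq_deriv_mul (by rwa [uIcc_of_le hab])
    (by rwa [uIcc_of_le hab]) hk'i (hF'c.intervalIntegrable_of_Icc hab)]
  rw [abs_le] at hrem hb ha ⊢
  constructor <;> linarith [hrem.1, hrem.2, hb.1, hb.2, ha.1, ha.2]

lemma intervalIntegral_zero_pi_eq_two_mul {f : ℝ → ℝ} (hf : Continuous f)
    (hf_symm : ∀ θ, f (π - θ) = f θ) :
    ∫ θ in (0:ℝ)..π, f θ = 2 * ∫ θ in (0:ℝ)..π / 2, f θ := by
  have hreflect : ∫ θ in π / 2..π, f θ = ∫ θ in (0:ℝ)..π / 2, f θ := by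
    simpa [hf_symm, show π - π / 2 = π / 2 by ring] using
      (intervalIntegral.integral_comp_sub_left f π (a := 0) (b := π / 2)).symm
  rw [← intervalIntegral.integral_add_adjacent_intervals (hf.intervalIntegrable 0 (π / 2))
    (hf.intervalIntegrable _ π), hreflect, two_mul]

lemma intervalIntegral_zero_pi_eq_zero {f : ℝ → ℝ} (hf_antisymm : ∀ θ, f (π - θ) = -f θ) :
    ∫ θ in (0:ℝ)..π, f θ = 0 := by
  have h := intervalIntegral.integral_comp_sub_left f π (a := 0) (b := π)
  simp only [hf_antisymm, intervalIntegral.integral_neg, sub_zero, sub_self] at h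
  linarith

lemma J0_eq_two_div_pi_mul (x : ℝ) :
    J0 x = 2 / π * ∫ θ in (0:ℝ)..π / 2, cos (x * sin θ) := by
  rw [J0, intervalIntegral_zero_pi_eq_two_mul (by fun_prop) fun θ => by rw [sin_pi_sub]]
  ring

lemma J1_eq_two_div_pi_mul (x : ℝ) :
    J1 x = 2 / π * ∫ θ in (0:ℝ)..π / 2, sin θ * sin (x * sin θ) := by
  have hsplit : ∫ θ in (0:ℝ)..π, cos (θ - x * sin θ) =
      (∫ θ in (0:ℝ)..π, cos θ * cos (x * sin θ)) + ∫ θ in (0:ℝ)..π, sin θ * sin (x * sin θ) := by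
    simp_rw [cos_sub]
    exact intervalIntegral.integral_add (by apply Continuous.intervalIntegrable; fun_prop)
      (by apply Continuous.intervalIntegrable; fun_prop)
  rw [J1, hsplit, intervalIntegral_zero_pi_eq_zero fun θ => by rw [cos_pi_sub, sin_pi_sub]; ring,
    intervalIntegral_zero_pi_eq_two_mul (by fun_prop) fun θ => by rw [sin_pi_sub]]
  ring

section Oscillatory

variable {x b : ℝ}

lemma cos_pos_of_mem_Icc_zero {θ : ℝ} (hb : b < π / 2) (hθ : θ ∈ Icc 0 b) : 0 < cos θ :=
  cos_pos_of_mem_Ioo ⟨by linarith [hθ.1, pi_pos], hθ.2.trans_lt hb⟩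

lemma abs_integral_cos_mul_sin_le (hx : 0 < x) (hb₀ : 0 ≤ b) (hb : b < π / 2) :
    |∫ θ in (0:ℝ)..b, cos (x * sin θ)| ≤ 2 / (x * cos b) := by
  have hcos : ∀ θ ∈ Icc 0 b, 0 < cos θ := fun _ => cos_pos_of_mem_Icc_zero hb
  have hk : ∀ θ ∈ Icc 0 b, HasDerivAt (fun θ => (x * cos θ)⁻¹) (x * sin θ / (x * cos θ) ^ 2) θ :=
    fun θ hθ => (((hasDerivAt_cos θ).const_mul x).inv (mul_pos hx (hcos θ hθ)).ne').congr_deriv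
      (by ring)
  have hF : ∀ θ ∈ Icc 0 b, HasDerivAt (fun θ => sin (x * sin θ))
      (cos (x * sin θ) * (x * cos θ)) θ :=
    fun θ _ => (hasDerivAt_sin _).comp θ ((hasDerivAt_sin θ).const_mul x)
  have hk'c : ContinuousOn (fun θ => x * sin θ / (x * cos θ) ^ 2) (Icc 0 b) :=
    ContinuousOn.div (by fun_prop) (by fun_prop) fun θ hθ =>
      pow_ne_zero 2 (mul_pos hx (hcos θ hθ)).ne'
  have hk'_nonneg : ∀ θ ∈ Icc 0 b, 0 ≤ x * sin θ / (x * cos θ) ^ 2 := fun θ hθ =>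
    div_nonneg (mul_nonneg hx.le (sin_nonneg_of_nonneg_of_le_pi hθ.1 (by linarith [hθ.2])))
      (sq_nonneg _)
  have hbound := abs_intervalIntegral_mul_deriv_le_two_mul hb₀ hk hF hk'c (by fun_prop)
    hk'_nonneg (by simp [hx.le]) fun θ _ => abs_sin_le_one _
  rwa [intervalIntegral.integral_congr fun θ hθ => ?_, ← div_eq_mul_inv] at hbound
  rw [uIcc_of_le hb₀] at hθ
  field_simp [(hcos θ hθ).ne']

lemma abs_integral_sin_mul_sin_mul_sin_le (hx : 0 < x) (hb₀ : 0 ≤ b) (hb : b < π / 2) :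
    |∫ θ in (0:ℝ)..b, sin θ * sin (x * sin θ)| ≤ 2 / (x * cos b) := by
  have hcos : ∀ θ ∈ Icc 0 b, 0 < cos θ := fun _ => cos_pos_of_mem_Icc_zero hb
  have hk : ∀ θ ∈ Icc 0 b, HasDerivAt (fun θ => tan θ / x) (1 / cos θ ^ 2 / x) θ :=
    fun θ hθ => (hasDerivAt_tan (hcos θ hθ).ne').div_const x
  have hF : ∀ θ ∈ Icc 0 b, HasDerivAt (fun θ => -cos (x * sin θ))
      (sin (x * sin θ) * (x * cos θ)) θ :=
    fun θ _ => (((hasDerivAt_cos _).comp θ ((hasDerivAt_sin θ).const_mul x)).neg).congr_deriv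
      (by ring)
  have hk'c : ContinuousOn (fun θ => 1 / cos θ ^ 2 / x) (Icc 0 b) :=
    (ContinuousOn.div (by fun_prop) (by fun_prop) fun θ hθ =>
      pow_ne_zero 2 (hcos θ hθ).ne').div_const x
  have hbound := abs_intervalIntegral_mul_deriv_le_two_mul hb₀ hk hF hk'c (by fun_prop)
    (fun θ _ => by positivity) (by simp) fun θ _ => by rw [abs_neg]; exact abs_cos_le_one _
  rw [intervalIntegral.integral_congr fun θ hθ => ?_] at hbound
  · calc _ ≤ 2 * (tan b / x) := hbound
      _ ≤ 2 / (x * cos b) := by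
        rw [tan_eq_sin_div_cos, div_div, mul_div_assoc', mul_comm (cos b)]
        have := hcos b (right_mem_Icc.2 hb₀)
        gcongr
        linarith [sin_le_one b]
  rw [uIcc_of_le hb₀] at hθ
  rw [tan_eq_sin_div_cos]
  field_simp [(hcos θ hθ).ne']

lemma abs_two_div_pi_mul_integral_le {f : ℝ → ℝ} (hx : 1 ≤ x) (hf : Continuous f)
    (hf_le : ∀ θ, |f θ| ≤ 1)
    (hf_osc : ∀ b, 0 ≤ b → b < π / 2 → |∫ θ in (0:ℝ)..b, f θ| ≤ 2 / (x * cos b)) :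
    |2 / π * ∫ θ in (0:ℝ)..π / 2, f θ| ≤ 3 / √x := by
  have hsx : 0 < √x := sqrt_pos.2 (by linarith)
  set ε := 1 / √x with hε
  have hε₀ : 0 < ε := by positivity
  have hε₁ : ε ≤ 1 := by rw [hε, div_le_one hsx, one_le_sqrt]; exact hx
  have hπ := pi_gt_three
  have hsplit := intervalIntegral.integral_add_adjacent_intervals
    (hf.intervalIntegrable (μ := volume) 0 (π / 2 - ε)) (hf.intervalIntegrable _ (π / 2))
  -- Jordan's inequality `sin ε ≥ 2ε/π` makes `x cos (π/2 - ε) ≥ 2√x/π`.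
  have hhead : |∫ θ in (0:ℝ)..π / 2 - ε, f θ| ≤ π / √x := by
    refine (hf_osc _ (by linarith) (by linarith)).trans ?_
    rw [cos_pi_div_two_sub]
    have hjordan := mul_le_sin hε₀.le (by linarith)
    have hxε : x * ε = √x := by rw [hε, mul_one_div, div_sqrt]
    have hsin : 2 / π * √x ≤ x * sin ε := by
      rw [← hxε, mul_left_comm]
      exact mul_le_mul_of_nonneg_left hjordan (by linarith)
    calc 2 / (x * sin ε) ≤ 2 / (2 / π * √x) := by gcongr
      _ = π / √x := by field_simp
  have htail : |∫ θ in π / 2 - ε..π / 2, f θ| ≤ ε := by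
    simpa [abs_of_pos hε₀] using intervalIntegral.norm_integral_le_of_norm_le_const
      (a := π / 2 - ε) (b := π / 2) (C := 1) (f := f) fun θ _ => hf_le θ
  calc |2 / π * ∫ θ in (0:ℝ)..π / 2, f θ|
      = 2 / π * |(∫ θ in (0:ℝ)..π / 2 - ε, f θ) + ∫ θ in π / 2 - ε..π / 2, f θ| := by
        rw [hsplit, abs_mul, abs_of_pos (by positivity)]
    _ ≤ 2 / π * (π / √x + 1 / √x) := by
        gcongr
        exact (abs_add_le _ _).trans (add_le_add hhead htail)
    _ = (2 + 2 / π) / √x := by field_simp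
    _ ≤ 3 / √x := by
        gcongr
        rw [← le_sub_iff_add_le', div_le_iff₀ (by positivity)]
        linarith

end Oscillatory

lemma abs_J0_le {x : ℝ} (hx : 1 ≤ x) : |J0 x| ≤ 3 / √x := by
  rw [J0_eq_two_div_pi_mul]
  exact abs_two_div_pi_mul_integral_le hx (by fun_prop) (fun θ => abs_cos_le_one _)
    fun b hb₀ hb => abs_integral_cos_mul_sin_le (by linarith) hb₀ hb

lemma abs_J1_le {x : ℝ} (hx : 1 ≤ x) : |J1 x| ≤ 3 / √x := by
  rw [J1_eq_two_div_pi_mul]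
  refine abs_two_div_pi_mul_integral_le hx (by fun_prop) (fun θ => ?_)
    fun b hb₀ hb => abs_integral_sin_mul_sin_mul_sin_le (by linarith) hb₀ hb
  rw [abs_mul]
  exact mul_le_one₀ (abs_sin_le_one _) (abs_nonneg _) (abs_sin_le_one _)

lemma continuous_J0 : Continuous J0 :=
  continuous_const.mul <|
    intervalIntegral.continuous_parametric_intervalIntegral_of_continuous' (by fun_prop) 0 π

lemma continuous_J1 : Continuous J1 :=
  continuous_const.mul <|
    intervalIntegral.continuous_parametric_intervalIntegral_of_continuous' (by fun_prop) 0 π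

lemma isBigO_atTop_rpow_neg_half_of_abs_le {f : ℝ → ℝ} {C : ℝ}
    (hf : ∀ x, 1 ≤ x → |f x| ≤ C / √x) :
    f =O[atTop] fun x => x ^ (-(1 / 2) : ℝ) := by
  refine IsBigO.of_bound C ?_
  filter_upwards [eventually_ge_atTop 1] with x hx
  rw [norm_eq_abs, norm_of_nonneg (rpow_nonneg (by linarith) _), rpow_neg (by linarith),
    ← sqrt_eq_rpow, ← div_eq_mul_inv]
  exact hf x hx

lemma Asymptotics.IsBigO.comp_mul_const_rpow {f : ℝ → ℝ} {s c : ℝ}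
    (hf : f =O[atTop] fun x => x ^ s) (hc : 0 < c) :
    (fun x => f (x * c)) =O[atTop] fun x => x ^ s := by
  refine (hf.comp_tendsto (tendsto_id.atTop_mul_const hc)).trans ?_
  refine (isBigO_const_mul_self (c ^ s) (fun x : ℝ => x ^ s) atTop).congr' ?_ EventuallyEq.rfl
  filter_upwards [eventually_ge_atTop 0] with x hx
  simp only [Function.comp_apply, id]
  rw [mul_rpow hx hc.le, mul_comm]

lemma isBigO_atTop_inv_rpow_add_const {a q : ℝ} (hq : 0 ≤ q) :
    (fun x : ℝ => (x ^ a + q)⁻¹) =O[atTop] fun x => x ^ (-a) := by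
  refine IsBigO.of_bound 1 ?_
  filter_upwards [eventually_gt_atTop 0] with x hx
  have hxa : 0 < x ^ a := rpow_pos_of_pos hx a
  rw [norm_inv, norm_eq_abs, norm_eq_abs, abs_of_pos (by positivity : 0 < x ^ a + q),
    rpow_neg hx.le, abs_of_pos (inv_pos.2 hxa), one_mul]
  exact inv_anti₀ hxa (le_add_of_nonneg_right hq)

theorem hankel_inversion_integrable_general (q α r L : ℝ) (hq : 0 < q) (hα : 0 < α)
    (hr : 0 < r) (hL : 0 < L) :
    IntegrableOn (fun ρ : ℝ => J0 (ρ * r) * J1 (ρ * L) / (ρ ^ (2 * α) + q)) (Ioi 0) := by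
  set g := fun ρ : ℝ => J0 (ρ * r) * J1 (ρ * L) / (ρ ^ (2 * α) + q)
  have hcont : ContinuousOn g (Ici 0) :=
    ((continuous_J0.comp (continuous_mul_const r)).mul
      (continuous_J1.comp (continuous_mul_const L))).continuousOn.div
      ((continuous_rpow_const (by linarith)).continuousOn.add continuousOn_const)
      fun ρ hρ => (add_pos_of_nonneg_of_pos (rpow_nonneg hρ _) hq).ne'
  have hJ0 := (isBigO_atTop_rpow_neg_half_of_abs_le fun _ => abs_J0_le).comp_mul_const_rpow hr
  have hJ1 := (isBigO_atTop_rpow_neg_half_of_abs_le fun _ => abs_J1_le).comp_mul_const_rpow hL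
  have hdecay : g =O[atTop] fun ρ => ρ ^ (-1 - 2 * α) := by
    refine ((hJ0.mul hJ1).mul (isBigO_atTop_inv_rpow_add_const hq.le)).congr'
      (.of_forall fun ρ => div_eq_mul_inv _ _) ?_
    filter_upwards [eventually_gt_atTop 0] with ρ hρ
    rw [← rpow_add hρ, ← rpow_add hρ]
    ring_nf
  exact ((hcont.locallyIntegrableOn measurableSet_Ici).integrableOn_of_isBigO_atTop hdecay
    (integrableAtFilter_rpow_atTop_iff.2 (by linarith))).mono_set Ioi_subset_Ici_self

/-- Convergence of the Hankel inversion integral for the full fractional solution: for every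
`q > 0`, `0 < α ≤ 1`, `r > 0` and `L > 0`, the function `ρ ↦ J₀(ρ·r)·J₁(ρ·L)/(ρ^{2α} + q)`
is Lebesgue integrable on `(0,∞)`. -/
theorem hankel_inversion_integrable (q α r L : ℝ) (hq : 0 < q) (hα : 0 < α) (hα' : α ≤ 1)
    (hr : 0 < r) (hL : 0 < L) :
    IntegrableOn (fun ρ : ℝ => J0 (ρ * r) * J1 (ρ * L) / (ρ ^ (2 * α) + q)) (Ioi 0) :=
  hankel_inversion_integrable_general q α r L hq hα hr hL
end
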